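/- arXiv:2012.15789 — 3 statements merged into one kernel-verified Lean document; each statement's English description precedes it below -/
import Mathlib

section
/- Let φ ∈ ℝ[z₁,z₂] and J, ν' ≥ 1, and suppose that φ − z₁^J z₂^{ν'} is divisible by z₂^{ν'+1}. Then the Hessian determinant ω := ∂₁²φ·∂₂²φ − (∂₁∂₂φ)² satisfies ω = C z₁^{2J−2} z₂^{2ν'−2} + ρ, where C = (1 − ν' − J)Jν' ≠ 0 and ρ ∈ ℝ[z₁,z₂] is divisible by z₂^{2ν'−1}. -/
open MvPolynomial

/-- The Hessian determinant ω = ∂₁²φ·∂₂²φ − (∂₁∂₂φ)² of a two-variable polynomial. -/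
noncomputable def hessDet (φ : MvPolynomial (Fin 2) ℝ) : MvPolynomial (Fin 2) ℝ :=
  pderiv 0 (pderiv 0 φ) * pderiv 1 (pderiv 1 φ) - (pderiv 0 (pderiv 1 φ)) ^ 2

private lemma sD0X0 (k : ℕ) : pderiv (0:Fin 2) ((X 0 : MvPolynomial (Fin 2) ℝ)^k)
    = (k : MvPolynomial (Fin 2) ℝ) * X 0 ^ (k-1) := by
  rw [pderiv_pow, pderiv_X_self, mul_one]

private lemma sD1X1 (k : ℕ) : pderiv (1:Fin 2) ((X 1 : MvPolynomial (Fin 2) ℝ)^k)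
    = (k : MvPolynomial (Fin 2) ℝ) * X 1 ^ (k-1) := by
  rw [pderiv_pow, pderiv_X_self, mul_one]

private lemma sD0X1 (k : ℕ) : pderiv (0:Fin 2) ((X 1 : MvPolynomial (Fin 2) ℝ)^k) = 0 := by
  rw [pderiv_pow, pderiv_X_of_ne (by decide), mul_zero]

private lemma sD1X0 (k : ℕ) : pderiv (1:Fin 2) ((X 0 : MvPolynomial (Fin 2) ℝ)^k) = 0 := by
  rw [pderiv_pow, pderiv_X_of_ne (by decide), mul_zero]

private lemma pderiv_natCast (i : Fin 2) (k : ℕ) :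
    pderiv i ((k : MvPolynomial (Fin 2) ℝ)) = 0 := by
  rw [← C_eq_coe_nat]; exact pderiv_C

private lemma auxA (x : MvPolynomial (Fin 2) ℝ) (k : ℕ) :
    (k : MvPolynomial (Fin 2) ℝ) * (x^(k-1) * x^(k+1)) = k * x^(2*k) := by
  cases k with
  | zero => simp
  | succ k =>
    rw [← pow_add]
    congr 2
    omega

private lemma auxB (x : MvPolynomial (Fin 2) ℝ) (k : ℕ) :
    (k : MvPolynomial (Fin 2) ℝ) * (x^(k-1) * x^(k+2)) = k * x^(2*k+1) := by
  cases k with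
  | zero => simp
  | succ k =>
    rw [← pow_add]
    congr 2
    omega

/-- If `φ − z₁^J z₂^{ν'}` is divisible by `z₂^{ν'+1}` (with `J, ν' ≥ 1`), then
`ω = C z₁^{2J−2} z₂^{2ν'−2} + ρ` with `C = (1 − ν' − J)Jν' ≠ 0` and `z₂^{2ν'−1} ∣ ρ`. -/
theorem stmt_4 (φ : MvPolynomial (Fin 2) ℝ) (J ν' : ℕ) (hJ : 1 ≤ J) (hν : 1 ≤ ν')
    (hdvd : (X 1 : MvPolynomial (Fin 2) ℝ) ^ (ν' + 1) ∣ φ - X 0 ^ J * X 1 ^ ν') :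
    ((1 - (ν' : ℝ) - (J : ℝ)) * (J : ℝ) * (ν' : ℝ) ≠ 0) ∧
    ∃ ρ : MvPolynomial (Fin 2) ℝ,
      hessDet φ = C ((1 - (ν' : ℝ) - (J : ℝ)) * (J : ℝ) * (ν' : ℝ))
          * X 0 ^ (2 * J - 2) * X 1 ^ (2 * ν' - 2) + ρ ∧
      (X 1 : MvPolynomial (Fin 2) ℝ) ^ (2 * ν' - 1) ∣ ρ := by
  obtain ⟨j, rfl⟩ := Nat.exists_eq_add_of_le hJ
  obtain ⟨n, rfl⟩ := Nat.exists_eq_add_of_le hν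
  obtain ⟨g, hg⟩ := hdvd
  have hφ : φ = X 0 ^ (j+1) * X 1 ^ (n+1) + X 1 ^ (n+2) * g := by
    linear_combination hg
  constructor
  · push_cast
    nlinarith [Nat.cast_nonneg (α := ℝ) n, Nat.cast_nonneg (α := ℝ) j,
      mul_nonneg (Nat.cast_nonneg (α := ℝ) n) (Nat.cast_nonneg (α := ℝ) j)]
  set h : MvPolynomial (Fin 2) ℝ :=
    (((n+2)*(n+1) : ℕ) : MvPolynomial (Fin 2) ℝ) * g + (((2*(n+2) : ℕ)) : MvPolynomial (Fin 2) ℝ) * X 1 * pderiv 1 g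
      + X 1 ^ 2 * pderiv 1 (pderiv 1 g) with hh
  set k : MvPolynomial (Fin 2) ℝ :=
    ((n+2 : ℕ) : MvPolynomial (Fin 2) ℝ) * pderiv 0 g + X 1 * pderiv 0 (pderiv 1 g) with hk
  have h1 : pderiv 0 (pderiv 0 φ)
      = (((j+1)*j : ℕ) : MvPolynomial (Fin 2) ℝ) * X 0 ^ (j-1) * X 1 ^ (n+1) + X 1 ^ (n+2) * pderiv 0 (pderiv 0 g) := by
    rw [hφ]
    simp only [map_add, pderiv_mul, sD0X0, sD0X1, sD1X0, sD1X1, pderiv_natCast,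
      Nat.add_sub_cancel, mul_zero, zero_mul, add_zero, zero_add]
    push_cast
    ring
  have h2 : pderiv 1 (pderiv 1 φ)
      = (((n+1)*n : ℕ) : MvPolynomial (Fin 2) ℝ) * X 0 ^ (j+1) * X 1 ^ (n-1) + X 1 ^ n * h := by
    rw [hφ, hh]
    simp only [map_add, pderiv_mul, sD0X0, sD0X1, sD1X0, sD1X1, pderiv_natCast,
      Nat.add_sub_cancel, mul_zero, zero_mul, add_zero, zero_add]
    push_cast
    ring
  have h3 : pderiv 0 (pderiv 1 φ)
      = (((j+1)*(n+1) : ℕ) : MvPolynomial (Fin 2) ℝ) * X 0 ^ j * X 1 ^ n + X 1 ^ (n+1) * k := by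
    rw [hφ, hk]
    simp only [map_add, pderiv_mul, sD0X0, sD0X1, sD1X0, sD1X1, pderiv_natCast,
      Nat.add_sub_cancel, mul_zero, zero_mul, add_zero, zero_add]
    push_cast
    ring
  have e1 : 2 * (1 + j) - 2 = 2 * j := by omega
  have e2 : 2 * (1 + n) - 2 = 2 * n := by omega
  have e3 : 2 * (1 + n) - 1 = 2 * n + 1 := by omega
  rw [e1, e2, e3]
  have hC : (C ((1 - ((1+n : ℕ) : ℝ) - ((1+j : ℕ) : ℝ)) * ((1+j : ℕ) : ℝ) * ((1+n : ℕ) : ℝ))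
      : MvPolynomial (Fin 2) ℝ)
      = (((j+1)*j*((n+1)*n) : ℕ) : MvPolynomial (Fin 2) ℝ)
        - (((j+1)*(n+1) : ℕ) : MvPolynomial (Fin 2) ℝ)^2 := by
    have : ((1 : ℝ) - ((1+n : ℕ) : ℝ) - ((1+j : ℕ) : ℝ)) * ((1+j : ℕ) : ℝ) * ((1+n : ℕ) : ℝ)
        = (((j+1)*j*((n+1)*n) : ℕ) : ℝ) - (((j+1)*(n+1) : ℕ) : ℝ)^2 := by
      push_cast; ring
    rw [this, map_sub, map_pow, C_eq_coe_nat, C_eq_coe_nat]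
  refine ⟨X 1 ^ (2*n+1) *
    ((((j+1)*j : ℕ) : MvPolynomial (Fin 2) ℝ) * X 0 ^ (j-1) * h + (((n+1)*n : ℕ) : MvPolynomial (Fin 2) ℝ) * X 0 ^ (j+1) * pderiv 0 (pderiv 0 g)
      + X 1 * pderiv 0 (pderiv 0 g) * h
      - (((2*(j+1)*(n+1) : ℕ)) : MvPolynomial (Fin 2) ℝ) * X 0 ^ j * k - X 1 * k^2), ?_, ?_⟩
  · rw [hC]
    show pderiv 0 (pderiv 0 φ) * pderiv 1 (pderiv 1 φ) - (pderiv 0 (pderiv 1 φ)) ^ 2 = _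
    rw [h1, h2, h3]
    linear_combination (norm := (push_cast; ring1))
      (((j+1 : ℕ) : MvPolynomial (Fin 2) ℝ) * ((n+1 : ℕ) : MvPolynomial (Fin 2) ℝ)
        * (n : MvPolynomial (Fin 2) ℝ) * (X 1 ^ (n-1) * X 1 ^ (n+1))) * auxA (X 0) j
      + (((j+1 : ℕ) : MvPolynomial (Fin 2) ℝ) * ((n+1 : ℕ) : MvPolynomial (Fin 2) ℝ)
        * (j : MvPolynomial (Fin 2) ℝ) * X 0 ^ (2*j)) * auxA (X 1) n
      + (((n+1 : ℕ) : MvPolynomial (Fin 2) ℝ) * X 0 ^ (j+1) * pderiv 0 (pderiv 0 g)) * auxB (X 1) n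
  · exact Dvd.intro _ rfl
end

section
/- Let φ ∈ ℝ[z₁,z₂], let ν ≥ 1, and suppose z₂^ν divides φ. If the operator T = T_{[−1,1]²} is of restricted weak type (p,q) for some 1 ≤ p, q ≤ ∞, then 1/q ≥ 1/p − 1/(ν + 1). -/
open MeasureTheory MvPolynomial
open scoped ENNReal

/-- The averaging operator `T_R f(x) = ∫_R f(x₁ − t₁, x₂ − t₂, x₃ − φ(t)) dt`
acting on nonnegative measurable functions on ℝ³. -/
noncomputable def avgOp (φ : ℝ × ℝ → ℝ) (R : Set (ℝ × ℝ))
    (f : ℝ × ℝ × ℝ → ℝ≥0∞) (x : ℝ × ℝ × ℝ) : ℝ≥0∞ :=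
  ∫⁻ t in R, f (x.1 - t.1, x.2.1 - t.2, x.2.2 - φ t)

/-- The bilinear pairing `⟨T_R χ_E, χ_F⟩`. -/
noncomputable def pairing (φ : ℝ × ℝ → ℝ) (R : Set (ℝ × ℝ))
    (E F : Set (ℝ × ℝ × ℝ)) : ℝ≥0∞ :=
  ∫⁻ x, avgOp φ R (E.indicator 1) x * F.indicator 1 x

/-- `T_R` is of restricted weak type `(p,q)`, written in terms of the reciprocals
`pinv = 1/p`, `qinv = 1/q` (so `1 ≤ p, q ≤ ∞` corresponds to `pinv, qinv ∈ [0,1]`):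
there is `C < ∞` with `⟨T_R χ_E, χ_F⟩ ≤ C |E|^{1/p} |F|^{1−1/q}` for all measurable
`E, F ⊆ ℝ³` of finite measure. -/
def RWT (φ : ℝ × ℝ → ℝ) (R : Set (ℝ × ℝ)) (pinv qinv : ℝ) : Prop :=
  ∃ C : ℝ, 0 ≤ C ∧ ∀ E F : Set (ℝ × ℝ × ℝ), MeasurableSet E → MeasurableSet F →
    volume E < ⊤ → volume F < ⊤ →
    pairing φ R E F ≤ ENNReal.ofReal C * volume E ^ pinv * volume F ^ (1 - qinv)

/-- The unit square `[−1,1]²` in ℝ². -/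
def unitSquare : Set (ℝ × ℝ) := Set.Icc ((-1, -1) : ℝ × ℝ) (1, 1)

/-!
If `z₂^ν ∣ φ`, then `|φ t| ≤ M |t₂|^ν` on `[-1,1]²`. Put `h = M δ^ν` and test the inequality on
`F = [0,1] × [0,δ] × [-h,h]` and `E = [-1,1] × [-δ,δ] × [-2h,2h]`: every `t ∈ [0,1] × [0,δ]` moves
every `x ∈ F` into `E`, so `⟨T χ_E, χ_F⟩ ≥ δ |F|`. Since `|E|` and `|F|` are both comparable to
`δ^(ν+1)`, this gives `δ^(ν+2) ≲ δ^((ν+1)(1/p + 1 - 1/q))`, and letting `δ → 0` compares the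
exponents.
-/

open Set Filter Topology

lemma le_of_forall_mul_rpow_le {a b c K : ℝ} (hc : 0 < c)
    (h : ∀ δ ∈ Ioc (0 : ℝ) 1, c * δ ^ a ≤ K * δ ^ b) : b ≤ a := by
  by_contra! hab
  have he : 0 < b - a := sub_pos.2 hab
  have hlim : Tendsto (fun δ : ℝ => K * δ ^ (b - a)) (𝓝[>] 0) (𝓝 0) := by
    have := (Real.continuousAt_rpow_const 0 (b - a) (Or.inr he.le)).tendsto.const_mul K
    simpa [Real.zero_rpow he.ne'] using this.mono_left nhdsWithin_le_nhds
  have hev : ∀ᶠ δ in 𝓝[>] (0 : ℝ), c ≤ K * δ ^ (b - a) := by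
    filter_upwards [Ioc_mem_nhdsGT one_pos] with δ hδ
    rw [Real.rpow_sub hδ.1, ← mul_div_assoc, le_div_iff₀ (Real.rpow_pos_of_pos hδ.1 a)]
    exact h δ hδ
  exact hc.not_ge (ge_of_tendsto hlim hev)

lemma exists_abs_eval_le_mul_pow_of_X_pow_dvd {p : MvPolynomial (Fin 2) ℝ} {ν : ℕ}
    (h : X 1 ^ ν ∣ p) {K : Set (ℝ × ℝ)} (hK : IsCompact K) :
    ∃ M, 0 < M ∧ ∀ t ∈ K, |eval ![t.1, t.2] p| ≤ M * |t.2| ^ ν := by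
  obtain ⟨q, rfl⟩ := h
  have hq : Continuous fun t : ℝ × ℝ => eval ![t.1, t.2] q :=
    (continuous_eval q).comp <| continuous_pi <|
      Fin.forall_fin_two.2 ⟨by simpa using continuous_fst, by simpa using continuous_snd⟩
  obtain ⟨B, hB⟩ := hK.exists_bound_of_continuousOn hq.continuousOn
  refine ⟨max B 1, by positivity, fun t ht => ?_⟩
  rw [map_mul, map_pow, eval_X, abs_mul, abs_pow, mul_comm]
  exact mul_le_mul_of_nonneg_right ((hB t ht).trans (le_max_left _ _)) (by positivity)

lemma volume_Icc_prod {a b : ℝ × ℝ} (h : a ≤ b) :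
    volume (Icc a b) = ENNReal.ofReal ((b.1 - a.1) * (b.2 - a.2)) := by
  rw [← Icc_prod_Icc, Measure.volume_eq_prod, Measure.prod_prod, Real.volume_Icc,
    Real.volume_Icc, ← ENNReal.ofReal_mul (sub_nonneg.2 h.1)]

lemma volume_Icc_prod_prod {a b : ℝ × ℝ × ℝ} (h : a ≤ b) :
    volume (Icc a b) =
      ENNReal.ofReal ((b.1 - a.1) * ((b.2.1 - a.2.1) * (b.2.2 - a.2.2))) := by
  rw [← Icc_prod_Icc, Measure.volume_eq_prod, Measure.prod_prod, Real.volume_Icc,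
    volume_Icc_prod h.2, ← ENNReal.ofReal_mul (sub_nonneg.2 h.1)]

lemma volume_mul_volume_le_pairing {φ : ℝ × ℝ → ℝ} {R S : Set (ℝ × ℝ)}
    {E F : Set (ℝ × ℝ × ℝ)} (hSR : S ⊆ R) (hS : MeasurableSet S) (hF : MeasurableSet F)
    (hSF : ∀ x ∈ F, ∀ t ∈ S, (x.1 - t.1, x.2.1 - t.2, x.2.2 - φ t) ∈ E) :
    volume S * volume F ≤ pairing φ R E F := by
  have hT : ∀ x ∈ F, volume S ≤ avgOp φ R (E.indicator 1) x := fun x hx =>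
    calc volume S = ∫⁻ _ in S, 1 := (setLIntegral_one S).symm
      _ ≤ ∫⁻ t in S, E.indicator 1 (x.1 - t.1, x.2.1 - t.2, x.2.2 - φ t) :=
        setLIntegral_mono' hS fun t ht => by simp [indicator_of_mem (hSF x hx t ht)]
      _ ≤ avgOp φ R (E.indicator 1) x := lintegral_mono_set hSR
  rw [← lintegral_indicator_const hF, pairing]
  refine lintegral_mono fun x => ?_
  by_cases hx : x ∈ F <;> simp [hx, hT]

lemma Icc_subset_unitSquare {δ : ℝ} (hδ : δ ≤ 1) :
    Icc ((0 : ℝ), (0 : ℝ)) (1, δ) ⊆ unitSquare :=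
  Icc_subset_Icc (Prod.mk_le_mk.2 ⟨by norm_num, by norm_num⟩) (Prod.mk_le_mk.2 ⟨le_rfl, hδ⟩)

lemma ofReal_mul_volume_le_pairing_Icc {φ : ℝ × ℝ → ℝ} {δ h : ℝ} (hδ0 : 0 ≤ δ)
    (hδ1 : δ ≤ 1) (hφ : ∀ t ∈ Icc ((0 : ℝ), (0 : ℝ)) (1, δ), |φ t| ≤ h) :
    ENNReal.ofReal δ * volume (Icc ((0 : ℝ), (0 : ℝ), -h) (1, δ, h)) ≤
      pairing φ unitSquare (Icc (-1, -δ, -(2 * h)) (1, δ, 2 * h))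
        (Icc (0, 0, -h) (1, δ, h)) := by
  have hS : volume (Icc ((0 : ℝ), (0 : ℝ)) (1, δ)) = ENNReal.ofReal δ := by
    rw [volume_Icc_prod (Prod.mk_le_mk.2 ⟨zero_le_one, hδ0⟩)]; norm_num
  rw [← hS]
  refine volume_mul_volume_le_pairing (Icc_subset_unitSquare hδ1) measurableSet_Icc
    measurableSet_Icc fun x hx t ht => ?_
  obtain ⟨hφl, hφu⟩ := abs_le.1 (hφ t ht)
  simp only [mem_Icc, Prod.le_def] at hx ht ⊢
  refine ⟨⟨?_, ?_, ?_⟩, ?_, ?_, ?_⟩ <;> linarith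

lemma RWT.exists_mul_le_of_abs_le {φ : ℝ × ℝ → ℝ} {pinv qinv : ℝ}
    (hT : RWT φ unitSquare pinv qinv) :
    ∃ C, 0 ≤ C ∧ ∀ δ h : ℝ, 0 < δ → δ ≤ 1 → 0 < h →
      (∀ t ∈ Icc ((0 : ℝ), (0 : ℝ)) (1, δ), |φ t| ≤ h) →
      δ * (2 * δ * h) ≤ C * (16 * δ * h) ^ pinv * (2 * δ * h) ^ (1 - qinv) := by
  obtain ⟨C, hC0, hC⟩ := hT
  refine ⟨C, hC0, fun δ h hδ0 hδ1 hh hφ => ?_⟩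
  have hE : volume (Icc ((-1 : ℝ), -δ, -(2 * h)) (1, δ, 2 * h)) =
      ENNReal.ofReal (16 * δ * h) := by
    rw [volume_Icc_prod_prod ⟨by norm_num, by linarith, by linarith⟩]; ring_nf
  have hF : volume (Icc ((0 : ℝ), (0 : ℝ), -h) (1, δ, h)) = ENNReal.ofReal (2 * δ * h) := by
    rw [volume_Icc_prod_prod ⟨zero_le_one, hδ0.le, by linarith⟩]; ring_nf
  have := (ofReal_mul_volume_le_pairing_Icc hδ0.le hδ1 hφ).trans
    (hC _ _ measurableSet_Icc measurableSet_Icc (by simp [hE]) (by simp [hF]))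
  rwa [hE, hF, ← ENNReal.ofReal_mul hδ0.le, ENNReal.ofReal_rpow_of_pos (by positivity),
    ENNReal.ofReal_rpow_of_pos (by positivity), ← ENNReal.ofReal_mul hC0,
    ← ENNReal.ofReal_mul (by positivity), ENNReal.ofReal_le_ofReal_iff (by positivity)] at this

lemma RWT.sub_one_div_le_of_abs_le_mul_pow {φ : ℝ × ℝ → ℝ} {ν : ℕ} {M pinv qinv : ℝ}
    (hM : 0 < M) (hφ : ∀ t ∈ unitSquare, |φ t| ≤ M * |t.2| ^ ν)
    (hT : RWT φ unitSquare pinv qinv) :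
    pinv - 1 / ((ν : ℝ) + 1) ≤ qinv := by
  obtain ⟨C, hC0, hC⟩ := hT.exists_mul_le_of_abs_le
  have key : ∀ δ ∈ Ioc (0 : ℝ) 1, 2 * M * δ ^ ((ν : ℝ) + 2) ≤
      C * (16 * M) ^ pinv * (2 * M) ^ (1 - qinv) * δ ^ (((ν : ℝ) + 1) * (pinv + (1 - qinv))) := by
    rintro δ ⟨hδ0, hδ1⟩
    have hδh : δ * (M * δ ^ ν) = M * δ ^ ((ν : ℝ) + 1) := by
      rw [Real.rpow_add_one hδ0.ne', Real.rpow_natCast]; ring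
    have hφδ : ∀ t ∈ Icc ((0 : ℝ), (0 : ℝ)) (1, δ), |φ t| ≤ M * δ ^ ν := fun t ht =>
      (hφ t (Icc_subset_unitSquare hδ1 ht)).trans <| by
        gcongr; exact abs_le.2 ⟨by linarith [ht.1.2], ht.2.2⟩
    calc 2 * M * δ ^ ((ν : ℝ) + 2) = δ * (2 * δ * (M * δ ^ ν)) := by
          rw [show (ν : ℝ) + 2 = ν + 1 + 1 by ring, Real.rpow_add_one hδ0.ne']
          linear_combination (-2 * δ) * hδh
      _ ≤ C * (16 * δ * (M * δ ^ ν)) ^ pinv * (2 * δ * (M * δ ^ ν)) ^ (1 - qinv) :=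
          hC δ _ hδ0 hδ1 (by positivity) hφδ
      _ = C * (16 * M) ^ pinv * (2 * M) ^ (1 - qinv) *
            δ ^ (((ν : ℝ) + 1) * (pinv + (1 - qinv))) := by
          rw [mul_assoc 16, mul_assoc 2, hδh, ← mul_assoc, ← mul_assoc,
            Real.mul_rpow (x := 16 * M) (by positivity) (by positivity),
            Real.mul_rpow (x := 2 * M) (by positivity) (by positivity),
            ← Real.rpow_mul hδ0.le, ← Real.rpow_mul hδ0.le, mul_add, Real.rpow_add hδ0]
          ring
  have hexp := le_of_forall_mul_rpow_le (by positivity) key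
  have hν : (0 : ℝ) < ν + 1 := by positivity
  have := (le_div_iff₀ hν).2 (by nlinarith : (pinv - qinv) * (ν + 1) ≤ 1)
  linarith

theorem stmt_11_general (φp : MvPolynomial (Fin 2) ℝ) (ν : ℕ)
    (hdvd : (X 1 : MvPolynomial (Fin 2) ℝ) ^ ν ∣ φp)
    (pinv qinv : ℝ)
    (hrwt : RWT (fun t => eval ![t.1, t.2] φp) unitSquare pinv qinv) :
    pinv - 1 / ((ν : ℝ) + 1) ≤ qinv := by
  obtain ⟨M, hM, hφ⟩ :=
    exists_abs_eval_le_mul_pow_of_X_pow_dvd hdvd (isCompact_Icc : IsCompact unitSquare)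
  exact hrwt.sub_one_div_le_of_abs_le_mul_pow hM hφ

/-- If `z₂^ν` divides φ (ν ≥ 1) and `T = T_{[−1,1]²}` is of restricted weak type `(p,q)`,
then `1/q ≥ 1/p − 1/(ν+1)`. -/
theorem stmt_11 (φp : MvPolynomial (Fin 2) ℝ) (ν : ℕ) (hν : 1 ≤ ν)
    (hdvd : (X 1 : MvPolynomial (Fin 2) ℝ) ^ ν ∣ φp)
    (pinv qinv : ℝ) (hp0 : 0 ≤ pinv) (hp1 : pinv ≤ 1) (hq0 : 0 ≤ qinv) (hq1 : qinv ≤ 1)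
    (hrwt : RWT (fun t => eval ![t.1, t.2] φp) unitSquare pinv qinv) :
    pinv - 1 / ((ν : ℝ) + 1) ≤ qinv :=
  stmt_11_general φp ν hdvd pinv qinv hrwt
end

section
/- Let φ ∈ ℝ[z₁,z₂], let λ ∈ ℝ, r ≥ 1, N ≥ 1, and suppose (z₂ − λz₁^r)^N divides φ. If the operator T = T_{[−1,1]²} is of restricted weak type (p,q) for some 1 ≤ p, q ≤ ∞, then 1/q ≥ ((N+1)/(N+2))·(1/p) − 1/(N+2), and (by duality) also 1/q ≥ ((N+2)/(N+1))·(1/p) − 2/(N+1). -/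
open MeasureTheory MvPolynomial
open scoped ENNReal

/-! Knapp examples. The divisibility gives `|φ t| ≲ |t₂ - γ t₁|^N` on the square, where
`γ s = λ s^r` is a Lipschitz curve through the origin; so `|φ| ≲ δ^N` on the `δ`-neighbourhood of
an arc of the curve. Testing the restricted weak type inequality on two families of sets and
letting `δ → 0` gives the two bounds:
* `F` a `δ × δ × δ^N` box and `E` a `δ`-neighbourhood of the reflected arc `s ↦ -γ(-s)` of height
  `δ^N`: every `x ∈ F` sees the whole strip of area `δ` around the arc, so
  `δ^{N+3} ≲ |E|^{1/p} |F|^{1-1/q} ≈ δ^{(N+1)/p + (N+2)(1-1/q)}`;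
* `E` a `δ × δ × δ^N` box and `F` the `δ`-neighbourhood of the arc of height `δ^N`: every `x ∈ F`
  sees a `δ × δ` square, so `δ^{N+3} ≲ δ^{(N+2)/p + (N+1)(1-1/q)}`. -/

open Set Filter Topology
open scoped NNReal

section Shear

variable {α G : Type*} [MeasurableSpace α] [MeasurableSpace G] [AddGroup G]
  [MeasurableAdd G] [MeasurableSub₂ G] {μ : Measure α} {ν : Measure G} [SFinite μ] [SFinite ν]
  [ν.IsAddRightInvariant]

theorem measurePreserving_shear {g : α → G} (hg : Measurable g) :
    MeasurePreserving (fun p : α × G => (p.1, p.2 - g p.1)) (μ.prod ν) (μ.prod ν) :=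
  (MeasurePreserving.id μ).skew_product (g := fun a y => y - g a)
    (measurable_snd.sub (hg.comp measurable_fst))
    (ae_of_all _ fun a => (measurePreserving_sub_right ν (g a)).map_eq)

end Shear

def strip (γ : ℝ → ℝ) (I : Set ℝ) (w : ℝ) : Set (ℝ × ℝ) :=
  {t | t.1 ∈ I ∧ |t.2 - γ t.1| ≤ w}

def slab (γ : ℝ → ℝ) (I : Set ℝ) (w h : ℝ) : Set (ℝ × ℝ × ℝ) :=
  {x | (x.1, x.2.1) ∈ strip γ I w ∧ |x.2.2| ≤ h}

theorem strip_eq_preimage (γ : ℝ → ℝ) (I : Set ℝ) (w : ℝ) :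
    strip γ I w = (fun t : ℝ × ℝ => (t.1, t.2 - γ t.1)) ⁻¹' (I ×ˢ Icc (-w) w) := by
  ext t; simp [strip, abs_le]

theorem slab_eq_preimage (γ : ℝ → ℝ) (I : Set ℝ) (w h : ℝ) :
    slab γ I w h = (fun x : ℝ × ℝ × ℝ => (x.1, x.2 - (γ x.1, 0))) ⁻¹'
      (I ×ˢ Icc (-w) w ×ˢ Icc (-h) h) := by
  ext x; simp [slab, strip, abs_le, and_assoc, -Icc_prod_Icc]

section Volume

variable {γ : ℝ → ℝ} {I : Set ℝ}

theorem measurableSet_strip (hγ : Measurable γ) (hI : MeasurableSet I) (w : ℝ) :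
    MeasurableSet (strip γ I w) := by
  rw [strip_eq_preimage]
  exact (by fun_prop : Measurable _) (hI.prod measurableSet_Icc)

theorem measurableSet_slab (hγ : Measurable γ) (hI : MeasurableSet I) (w h : ℝ) :
    MeasurableSet (slab γ I w h) := by
  rw [slab_eq_preimage]
  exact (by fun_prop : Measurable _) (hI.prod (measurableSet_Icc.prod measurableSet_Icc))

theorem volume_strip (hγ : Measurable γ) (hI : MeasurableSet I) (w : ℝ) :
    volume (strip γ I w) = volume I * ENNReal.ofReal (2 * w) := by
  rw [strip_eq_preimage, Measure.volume_eq_prod,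
    (measurePreserving_shear hγ).measure_preimage
      (hI.prod measurableSet_Icc).nullMeasurableSet,
    Measure.prod_prod, Real.volume_Icc]
  ring_nf

theorem volume_slab (hγ : Measurable γ) (hI : MeasurableSet I) (w h : ℝ) :
    volume (slab γ I w h) = volume I * ENNReal.ofReal (2 * w) * ENNReal.ofReal (2 * h) := by
  rw [slab_eq_preimage, Measure.volume_eq_prod,
    (measurePreserving_shear (hγ.prodMk measurable_const)).measure_preimage
      (hI.prod (measurableSet_Icc.prod measurableSet_Icc)).nullMeasurableSet,
    Measure.prod_prod, Measure.volume_eq_prod, Measure.prod_prod, Real.volume_Icc, Real.volume_Icc]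
  ring_nf

theorem volume_slab_Icc (hγ : Measurable γ) {a b w : ℝ} (hab : a ≤ b) (hw : 0 ≤ w)
    (h : ℝ) : volume (slab γ (Icc a b) w h) = ENNReal.ofReal ((b - a) * (2 * w) * (2 * h)) := by
  rw [volume_slab hγ measurableSet_Icc, Real.volume_Icc, ← ENNReal.ofReal_mul (by linarith),
    ← ENNReal.ofReal_mul (by positivity)]

end Volume

theorem volume_le_avgOp_indicator {φ : ℝ × ℝ → ℝ} {R S : Set (ℝ × ℝ)} {E : Set (ℝ × ℝ × ℝ)}
    {x : ℝ × ℝ × ℝ} (hSR : S ⊆ R) (hS : MeasurableSet S)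
    (hSE : ∀ t ∈ S, (x.1 - t.1, x.2.1 - t.2, x.2.2 - φ t) ∈ E) :
    volume S ≤ avgOp φ R (E.indicator 1) x :=
  calc volume S = ∫⁻ t in S, E.indicator 1 (x.1 - t.1, x.2.1 - t.2, x.2.2 - φ t) := by
        rw [setLIntegral_congr_fun hS fun t ht => indicator_of_mem (hSE t ht) 1]
        simp
    _ ≤ avgOp φ R (E.indicator 1) x := lintegral_mono_set hSR

theorem mul_volume_le_pairing {φ : ℝ × ℝ → ℝ} {R : Set (ℝ × ℝ)} {E F : Set (ℝ × ℝ × ℝ)}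
    {m : ℝ≥0∞} (hF : MeasurableSet F)
    (h : ∀ x ∈ F, ∃ S ⊆ R, MeasurableSet S ∧ m ≤ volume S ∧
      ∀ t ∈ S, (x.1 - t.1, x.2.1 - t.2, x.2.2 - φ t) ∈ E) :
    m * volume F ≤ pairing φ R E F := by
  rw [← lintegral_indicator_const hF]
  refine lintegral_mono fun x => ?_
  by_cases hx : x ∈ F
  · obtain ⟨S, hSR, hS, hmS, hSE⟩ := h x hx
    simpa [hx] using hmS.trans (volume_le_avgOp_indicator hSR hS hSE)
  · simp [hx]

theorem le_of_eventually_mul_rpow_le {a b c₁ c₂ : ℝ} (hc₁ : 0 < c₁)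
    (h : ∀ᶠ δ in 𝓝[>] 0, c₁ * δ ^ a ≤ c₂ * δ ^ b) : b ≤ a := by
  by_contra! hab
  have hlim : Tendsto (fun δ : ℝ => c₂ * δ ^ (b - a)) (𝓝[>] 0) (𝓝 0) := by
    have := (Real.continuousAt_rpow_const 0 (b - a) (Or.inr (sub_pos.2 hab).le)).tendsto
      |>.const_mul c₂
    rw [Real.zero_rpow (sub_pos.2 hab).ne', mul_zero] at this
    exact this.mono_left nhdsWithin_le_nhds
  refine hc₁.not_ge (ge_of_tendsto hlim ?_)
  filter_upwards [h, self_mem_nhdsWithin] with δ hδ (hδ0 : 0 < δ)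
  rw [Real.rpow_sub hδ0, ← mul_div_assoc, le_div_iff₀ (Real.rpow_pos_of_pos hδ0 a)]
  exact hδ

theorem RWT.exponent_le {φ : ℝ × ℝ → ℝ} {R : Set (ℝ × ℝ)} {p q : ℝ} (h : RWT φ R p q)
    {a e f : ℕ} {cm cE cF : ℝ} (hcm : 0 < cm) (hcE : 0 < cE) (hcF : 0 < cF)
    (hfam : ∀ᶠ δ in 𝓝[>] 0, ∃ E F : Set (ℝ × ℝ × ℝ), MeasurableSet E ∧ MeasurableSet F ∧
      volume E = ENNReal.ofReal (cE * δ ^ e) ∧ volume F = ENNReal.ofReal (cF * δ ^ f) ∧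
      ENNReal.ofReal (cm * δ ^ a) * volume F ≤ pairing φ R E F) :
    e * p + f * (1 - q) ≤ a + f := by
  obtain ⟨C, hC, hCEF⟩ := h
  refine le_of_eventually_mul_rpow_le (c₁ := cm * cF) (c₂ := C * cE ^ p * cF ^ (1 - q))
    (by positivity) ?_
  filter_upwards [hfam, self_mem_nhdsWithin] with δ ⟨E, F, hE, hF, hvE, hvF, hlow⟩ (hδ : 0 < δ)
  have key := hlow.trans (hCEF E F hE hF (by simp [hvE]) (by simp [hvF]))
  rw [hvE, hvF, ← ENNReal.ofReal_mul (by positivity), ENNReal.ofReal_rpow_of_pos (by positivity),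
    ENNReal.ofReal_rpow_of_pos (by positivity), ← ENNReal.ofReal_mul hC,
    ← ENNReal.ofReal_mul (by positivity), ENNReal.ofReal_le_ofReal_iff (by positivity)] at key
  convert key using 1
  · rw [Real.rpow_add hδ, Real.rpow_natCast, Real.rpow_natCast]; ring
  · rw [Real.mul_rpow hcE.le (by positivity), Real.mul_rpow hcF.le (by positivity),
      ← Real.rpow_natCast, ← Real.rpow_natCast, ← Real.rpow_mul hδ.le, ← Real.rpow_mul hδ.le,
      Real.rpow_add hδ]
    ring

theorem mem_unitSquare {t : ℝ × ℝ} (h₁ : |t.1| ≤ 1) (h₂ : |t.2| ≤ 1) : t ∈ unitSquare := by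
  rw [abs_le] at h₁ h₂
  exact ⟨⟨h₁.1, h₂.1⟩, ⟨h₁.2, h₂.2⟩⟩

theorem LipschitzOnWith.abs_sub_le_of_abs_sub_le {γ : ℝ → ℝ} {L : ℝ≥0} {s : Set ℝ}
    (hγ : LipschitzOnWith L γ s) {u v y z δ : ℝ} (hu : u ∈ s) (hv : v ∈ s)
    (hy : |y - γ u| ≤ δ) (huv : |u - v| ≤ δ) (hz : |z - y| ≤ δ) : |z - γ v| ≤ (2 + L) * δ := by
  have hlip : |γ u - γ v| ≤ L * |u - v| := by simpa [Real.dist_eq] using hγ.dist_le_mul u hu v hv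
  calc |z - γ v| = |(z - y) + (y - γ u) + (γ u - γ v)| := by ring_nf
    _ ≤ |z - y| + |y - γ u| + |γ u - γ v| := abs_add_three _ _ _
    _ ≤ δ + δ + L * δ := by gcongr; exact hlip.trans (by gcongr)
    _ = (2 + L) * δ := by ring

section Knapp

variable {φ : ℝ × ℝ → ℝ} {γ : ℝ → ℝ} {L : ℝ≥0} {K c p q : ℝ} {N : ℕ}
  (hrwt : RWT φ unitSquare p q) (hγm : Measurable γ) (hγ : LipschitzOnWith L γ (Icc (-1) 1))
  (hc : 0 < c) (hc₁ : c ≤ 1 / 2) (hγc : ∀ s ∈ Icc 0 c, |γ s| ≤ 1 / 2) (hK : 0 < K)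
  (hφ : ∀ t ∈ unitSquare, |φ t| ≤ K * |t.2 - γ t.1| ^ N)
include hrwt hγm hγ hc hc₁ hγc hK hφ

theorem RWT.exponent_le_of_test_box :
    (N + 1) * p + (N + 2) * (1 - q) ≤ N + 3 := by
  have := hrwt.exponent_le (a := 1) (e := N + 1) (f := N + 2) (cm := 2 * c)
    (cE := 16 * (2 + L) * K) (cF := 4 * K) (by positivity) (by positivity) (by positivity) ?_
  · push_cast at this; linarith
  filter_upwards [Ioo_mem_nhdsGT (show (0 : ℝ) < 1 / 2 by norm_num)] with δ ⟨hδ, hδ₁⟩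
  have hγm' : Measurable fun s => -γ (-s) := (hγm.comp measurable_neg).neg
  refine ⟨slab (fun s => -γ (-s)) (Icc (-1) 1) ((2 + L) * δ) (2 * K * δ ^ N),
    slab (fun _ => 0) (Icc 0 δ) δ (K * δ ^ N), measurableSet_slab hγm' measurableSet_Icc _ _,
    measurableSet_slab measurable_const measurableSet_Icc _ _, ?_, ?_, ?_⟩
  · rw [volume_slab_Icc hγm' (by norm_num) (by positivity)]; ring_nf
  · rw [volume_slab_Icc measurable_const hδ.le hδ.le]; ring_nf
  have hS : strip γ (Icc 0 c) δ ⊆ unitSquare := fun t ⟨⟨ht₀, htc⟩, ht⟩ =>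
    mem_unitSquare (abs_le.2 ⟨by linarith, by linarith⟩)
      (by linarith [abs_sub_abs_le_abs_sub t.2 (γ t.1), hγc t.1 ⟨ht₀, htc⟩])
  refine mul_volume_le_pairing (measurableSet_slab measurable_const measurableSet_Icc _ _)
    fun x hx => ⟨strip γ (Icc 0 c) δ, hS, measurableSet_strip hγm measurableSet_Icc _, ?_, ?_⟩
  · rw [volume_strip hγm measurableSet_Icc, Real.volume_Icc, ← ENNReal.ofReal_mul (by linarith)]
    exact (congrArg ENNReal.ofReal (by ring)).le
  intro t ht
  have hφt : |φ t| ≤ K * δ ^ N := (hφ t (hS ht)).trans (by gcongr; exact ht.2)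
  simp only [slab, strip, mem_ofPred_eq, mem_Icc, sub_zero, neg_sub] at hx ht ⊢
  obtain ⟨⟨⟨hx₀, hxδ⟩, hx₂⟩, hx₃⟩ := hx
  obtain ⟨⟨ht₀, htc⟩, htγ⟩ := ht
  have hγt := hγ.abs_sub_le_of_abs_sub_le (v := t.1 - x.1) (z := t.2 - x.2.1)
    ⟨by linarith, by linarith⟩ ⟨by linarith, by linarith⟩ htγ
    (abs_le.2 ⟨by linarith, by linarith⟩) (by rwa [sub_sub_cancel_left, abs_neg])
  rw [abs_le] at hx₃ hφt hγt
  refine ⟨⟨⟨by linarith, by linarith⟩, abs_le.2 ⟨by linarith, by linarith⟩⟩,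
    abs_le.2 ⟨by linarith, by linarith⟩⟩

theorem RWT.exponent_le_of_input_box :
    (N + 2) * p + (N + 1) * (1 - q) ≤ N + 3 := by
  have := hrwt.exponent_le (a := 2) (e := N + 2) (f := N + 1) (cm := 4)
    (cE := 8 * K * (1 + (2 + L) ^ N)) (cF := 4 * c * K) (by positivity) (by positivity)
    (by positivity) ?_
  · push_cast at this; linarith
  filter_upwards [Ioo_mem_nhdsGT (show (0 : ℝ) < 1 / 4 by norm_num)] with δ ⟨hδ, hδ₁⟩
  refine ⟨slab (fun _ => 0) (Icc (-δ) δ) δ (K * (1 + (2 + L) ^ N) * δ ^ N),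
    slab γ (Icc 0 c) δ (K * δ ^ N), measurableSet_slab measurable_const measurableSet_Icc _ _,
    measurableSet_slab hγm measurableSet_Icc _ _, ?_, ?_, ?_⟩
  · rw [volume_slab_Icc measurable_const (by linarith) hδ.le]; ring_nf
  · rw [volume_slab_Icc hγm hc.le hδ.le]; ring_nf
  refine mul_volume_le_pairing (measurableSet_slab hγm measurableSet_Icc _ _) fun x hx => ?_
  simp only [slab, strip, mem_ofPred_eq, mem_Icc] at hx
  obtain ⟨⟨⟨hx₀, hxc⟩, hxγ⟩, hx₃⟩ := hx
  have hS : strip (fun _ => x.2.1) (Icc (x.1 - δ) (x.1 + δ)) δ ⊆ unitSquare := by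
    rintro t ⟨⟨ht₁, ht₁'⟩, ht₂⟩
    have hγx := hγc x.1 ⟨hx₀, hxc⟩
    rw [abs_le] at ht₂ hxγ hγx
    exact mem_unitSquare (abs_le.2 ⟨by linarith, by linarith⟩) (abs_le.2 ⟨by linarith, by linarith⟩)
  refine ⟨strip (fun _ => x.2.1) (Icc (x.1 - δ) (x.1 + δ)) δ, hS,
    measurableSet_strip measurable_const measurableSet_Icc _, ?_, ?_⟩
  · rw [volume_strip measurable_const measurableSet_Icc, Real.volume_Icc,
      ← ENNReal.ofReal_mul (by linarith)]
    exact (congrArg ENNReal.ofReal (by ring)).le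
  intro t ht
  have htS := hS ht
  simp only [strip, mem_ofPred_eq, mem_Icc] at ht
  obtain ⟨⟨ht₁, ht₁'⟩, ht₂⟩ := ht
  have hγt : |t.2 - γ t.1| ≤ (2 + L) * δ := hγ.abs_sub_le_of_abs_sub_le
    ⟨by linarith, by linarith⟩ ⟨by linarith, by linarith⟩ hxγ
    (abs_le.2 ⟨by linarith, by linarith⟩) ht₂
  have hφt : |φ t| ≤ K * (2 + L) ^ N * δ ^ N := by
    rw [mul_assoc, ← mul_pow]
    exact (hφ t htS).trans (by gcongr)
  simp only [slab, strip, mem_ofPred_eq, mem_Icc, sub_zero]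
  rw [abs_le] at ht₂ hx₃ hφt
  refine ⟨⟨⟨by linarith, by linarith⟩, abs_le.2 ⟨by linarith, by linarith⟩⟩,
    abs_le.2 ⟨by linarith, by linarith⟩⟩

end Knapp

theorem RWT.exponent_bounds_of_abs_le_mul_pow {φ : ℝ × ℝ → ℝ} {γ : ℝ → ℝ} {L : ℝ≥0} {K p q : ℝ}
    {N : ℕ} (hrwt : RWT φ unitSquare p q) (hγm : Measurable γ) (hγ₀ : γ 0 = 0)
    (hγ : LipschitzOnWith L γ (Icc (-1) 1)) (hK : 0 < K)
    (hφ : ∀ t ∈ unitSquare, |φ t| ≤ K * |t.2 - γ t.1| ^ N) :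
    (N + 1) * p + (N + 2) * (1 - q) ≤ N + 3 ∧ (N + 2) * p + (N + 1) * (1 - q) ≤ N + 3 := by
  set c : ℝ := 1 / (2 * (L + 1))
  have hc : 0 < c := by positivity
  have hc₁ : c ≤ 1 / 2 := one_div_le_one_div_of_le (by norm_num) (by linarith [L.2])
  have hγc : ∀ s ∈ Icc 0 c, |γ s| ≤ 1 / 2 := fun s ⟨hs₀, hsc⟩ => by
    have hlip := hγ.dist_le_mul s ⟨by linarith, by linarith⟩ 0 ⟨by norm_num, by norm_num⟩
    rw [Real.dist_eq, Real.dist_eq, hγ₀, sub_zero, sub_zero, abs_of_nonneg hs₀] at hlip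
    calc |γ s| ≤ L * c := hlip.trans (mul_le_mul_of_nonneg_left hsc L.2)
      _ ≤ 1 / 2 := by
        rw [mul_one_div, div_le_iff₀ (by positivity)]
        linarith
  exact ⟨hrwt.exponent_le_of_test_box hγm hγ hc hc₁ hγc hK hφ,
    hrwt.exponent_le_of_input_box hγm hγ hc hc₁ hγc hK hφ⟩

theorem MvPolynomial.exists_abs_eval_le_mul_pow_of_pow_dvd {σ : Type*} {f g : MvPolynomial σ ℝ}
    {N : ℕ} (h : g ^ N ∣ f) {s : Set (σ → ℝ)} (hs : IsCompact s) :
    ∃ K > 0, ∀ x ∈ s, |eval x f| ≤ K * |eval x g| ^ N := by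
  obtain ⟨ψ, rfl⟩ := h
  obtain ⟨K, hK⟩ := hs.exists_bound_of_continuousOn (continuous_eval ψ).continuousOn
  refine ⟨max K 1, by positivity, fun x hx => ?_⟩
  rw [map_mul, map_pow, abs_mul, abs_pow, mul_comm]
  gcongr
  exact (hK x hx).trans (le_max_left _ _)

theorem stmt_13_general (φp : MvPolynomial (Fin 2) ℝ) (lam : ℝ) (r N : ℕ) (hr : 1 ≤ r)
    (hdvd : (X 1 - C lam * X 0 ^ r : MvPolynomial (Fin 2) ℝ) ^ N ∣ φp)
    (pinv qinv : ℝ)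
    (hrwt : RWT (fun t => eval ![t.1, t.2] φp) unitSquare pinv qinv) :
    ((N : ℝ) + 1) / ((N : ℝ) + 2) * pinv - 1 / ((N : ℝ) + 2) ≤ qinv ∧
    ((N : ℝ) + 2) / ((N : ℝ) + 1) * pinv - 2 / ((N : ℝ) + 1) ≤ qinv := by
  obtain ⟨K, hK, hφ⟩ := exists_abs_eval_le_mul_pow_of_pow_dvd hdvd
    ((isCompact_Icc : IsCompact unitSquare).image (f := fun t : ℝ × ℝ => ![t.1, t.2])
      (by fun_prop))
  have hγ : ContDiff ℝ 1 fun s : ℝ => lam * s ^ r := by fun_prop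
  obtain ⟨L, hL⟩ :=
    hγ.contDiffOn.exists_lipschitzOnWith one_ne_zero (convex_Icc _ _) isCompact_Icc
  obtain ⟨h₁, h₂⟩ := hrwt.exponent_bounds_of_abs_le_mul_pow (by fun_prop)
    (by simp [zero_pow (by omega : r ≠ 0)]) hL hK fun t ht => by
      simpa using hφ _ (mem_image_of_mem _ ht)
  constructor
  · rw [div_mul_eq_mul_div, div_sub_div_same, div_le_iff₀ (by positivity)]; linarith
  · rw [div_mul_eq_mul_div, div_sub_div_same, div_le_iff₀ (by positivity)]; linarith

/-- If `(z₂ − λz₁^r)^N` divides φ (λ ∈ ℝ, r ≥ 1, N ≥ 1) and `T = T_{[−1,1]²}` is of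
restricted weak type `(p,q)`, then `1/q ≥ ((N+1)/(N+2))(1/p) − 1/(N+2)` and (by duality)
`1/q ≥ ((N+2)/(N+1))(1/p) − 2/(N+1)`. -/
theorem stmt_13 (φp : MvPolynomial (Fin 2) ℝ) (lam : ℝ) (r N : ℕ) (hr : 1 ≤ r) (hN : 1 ≤ N)
    (hdvd : (X 1 - C lam * X 0 ^ r : MvPolynomial (Fin 2) ℝ) ^ N ∣ φp)
    (pinv qinv : ℝ) (hp0 : 0 ≤ pinv) (hp1 : pinv ≤ 1) (hq0 : 0 ≤ qinv) (hq1 : qinv ≤ 1)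
    (hrwt : RWT (fun t => eval ![t.1, t.2] φp) unitSquare pinv qinv) :
    ((N : ℝ) + 1) / ((N : ℝ) + 2) * pinv - 1 / ((N : ℝ) + 2) ≤ qinv ∧
    ((N : ℝ) + 2) / ((N : ℝ) + 1) * pinv - 2 / ((N : ℝ) + 1) ≤ qinv :=
  stmt_13_general φp lam r N hr hdvd pinv qinv hrwt
end
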